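/- Define T(n,s,i) as the number of s-element subsets γ = {γ₁ < ... < γ_s} of {1,...,n} with exactly i indices j satisfying γⱼ ≠ 2j. Then for i < s < ⌊n/2⌋, T(n,s,i) = T(n,s+1,i), and for s < ⌊n/2⌋, T(n,s,s) = T(n,s+1,s). -/

import Mathlib

/-!
Splitting off the largest element gives a Pascal-type recurrence: an `(s + 1)`-subset of
`{1, …, n + 1}` either avoids `n + 1`, or is an `s`-subset of `{1, …, n}` followed by the mark
`n + 1`, which is at home exactly when `n + 1 = 2 (s + 1)`. Induction on `n` along this
recurrence gives `T n s i = T n k k` with `k = i - max 0 (2 s - n)`; so for `2 s ≤ n` the count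
`T n s i` only depends on `n` and `i`.
-/

/-- Number of marks not at home: indices `j` (0-indexed) with `γⱼ₊₁ ≠ 2(j+1)`. -/
def natCount (γ : Finset ℕ) : ℕ :=
  ((Finset.range γ.card).filter fun j => (γ.sort (· ≤ ·)).getD j 0 ≠ 2 * (j + 1)).card

/-- `T n s i` counts the `s`-element subsets of `{1,…,n}` with exactly `i` marks not at home. -/
def T (n s i : ℕ) : ℕ :=
  (((Finset.Icc 1 n).powersetCard s).filter fun γ => natCount γ = i).card

open Finset

theorem Finset.sort_insert_of_forall_lt {α : Type*} [LinearOrder α] {γ : Finset α} {m : α}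
    (h : ∀ x ∈ γ, x < m) :
    (insert m γ).sort (· ≤ ·) = γ.sort (· ≤ ·) ++ [m] := by
  have hnodup : (γ.sort (· ≤ ·) ++ [m]).Nodup :=
    List.nodup_append.2 ⟨sort_nodup _ _, List.nodup_singleton m,
      fun x hx y hy => by rw [List.mem_singleton.1 hy]; exact (h x ((mem_sort _).1 hx)).ne⟩
  have hfinset : (γ.sort (· ≤ ·) ++ [m]).toFinset = insert m γ := by
    ext x; simp
  rw [← hfinset, List.toFinset_sort _ hnodup]
  exact List.pairwise_append.2 ⟨pairwise_sort _ _, List.pairwise_singleton _ _,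
    fun x hx y hy => by rw [List.mem_singleton.1 hy]; exact (h x ((mem_sort _).1 hx)).le⟩

lemma natCount_insert_of_forall_lt {γ : Finset ℕ} {m : ℕ} (h : ∀ x ∈ γ, x < m) :
    natCount (insert m γ) = natCount γ + if m = 2 * (γ.card + 1) then 0 else 1 := by
  have hcard : (insert m γ).card = γ.card + 1 :=
    card_insert_of_notMem fun hm => (h m hm).false
  have hlen : (γ.sort (· ≤ ·)).length = γ.card := length_sort _
  unfold natCount
  rw [hcard, sort_insert_of_forall_lt h, range_add_one, filter_insert]
  have hlast : (γ.sort (· ≤ ·) ++ [m]).getD γ.card 0 = m := by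
    rw [List.getD_append_right _ _ _ _ hlen.le, hlen]; simp
  have hprefix : ∀ j ∈ range γ.card,
      (γ.sort (· ≤ ·) ++ [m]).getD j 0 = (γ.sort (· ≤ ·)).getD j 0 := fun j hj =>
    List.getD_append _ _ _ _ (hlen ▸ mem_range.1 hj)
  rw [hlast, filter_congr fun j hj => by rw [hprefix j hj]]
  by_cases hm : m = 2 * (γ.card + 1)
  · simp [hm]
  · simp [hm, card_insert_of_notMem]

lemma T_zero_zero (n : ℕ) : T n 0 0 = 1 := by
  simp [T, natCount, filter_singleton]

lemma T_succ_succ (n s i : ℕ) :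
    T (n + 1) (s + 1) i = T n (s + 1) i +
      ((powersetCard s (Icc 1 n)).filter
        fun γ => natCount γ + (if n + 1 = 2 * (s + 1) then 0 else 1) = i).card := by
  have hnew : n + 1 ∉ Icc 1 n := by simp
  have hlt : ∀ γ ∈ powersetCard s (Icc 1 n), ∀ x ∈ γ, x < n + 1 := fun γ hγ x hx => by
    have := (mem_powersetCard.1 hγ).1 hx; rw [mem_Icc] at this; omega
  rw [T, T, ← insert_Icc_right_eq_Icc_add_one (by omega : 1 ≤ n + 1),
    powersetCard_succ_insert hnew, filter_union, card_union_of_disjoint, filter_image,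
    card_image_of_injOn]
  · congr 2
    refine filter_congr fun γ hγ => ?_
    rw [natCount_insert_of_forall_lt (hlt γ hγ), (mem_powersetCard.1 hγ).2]
  · intro a ha b hb hab
    simp only [coe_filter] at ha hb
    rw [← erase_insert fun h => (hlt a ha.1 _ h).false, hab,
      erase_insert fun h => (hlt b hb.1 _ h).false]
  · refine disjoint_left.2 fun γ hγ hγ' => ?_
    obtain ⟨δ, -, rfl⟩ := mem_image.1 (mem_filter.1 hγ').1
    simpa using (mem_powersetCard.1 (mem_filter.1 hγ).1).1 (mem_insert_self _ _)

lemma T_succ_succ_of_eq {n s : ℕ} (h : n + 1 = 2 * (s + 1)) (i : ℕ) :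
    T (n + 1) (s + 1) i = T n (s + 1) i + T n s i := by
  rw [T_succ_succ, if_pos h]
  rfl

lemma T_succ_succ_zero_of_ne {n s : ℕ} (h : n + 1 ≠ 2 * (s + 1)) :
    T (n + 1) (s + 1) 0 = T n (s + 1) 0 := by
  simp [T_succ_succ, h]

lemma T_succ_succ_succ_of_ne {n s : ℕ} (h : n + 1 ≠ 2 * (s + 1)) (i : ℕ) :
    T (n + 1) (s + 1) (i + 1) = T n (s + 1) (i + 1) + T n s i := by
  rw [T_succ_succ, if_neg h]
  simp only [Nat.add_right_cancel_iff]
  rfl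

lemma T_eq_zero_of_add_lt : ∀ {n s i : ℕ}, n + i < 2 * s → T n s i = 0
  | 0, s, i, h => by
    rw [T, powersetCard_eq_empty.2 (by rw [Nat.card_Icc]; omega)]
    rfl
  | n + 1, 0, i, h => by omega
  | n + 1, s + 1, 0, h => by
    rw [T_succ_succ_zero_of_ne (by omega), T_eq_zero_of_add_lt (by omega)]
  | n + 1, s + 1, i + 1, h => by
    rw [T_succ_succ_succ_of_ne (by omega), T_eq_zero_of_add_lt (by omega),
      T_eq_zero_of_add_lt (by omega)]

lemma T_diag_succ_succ {n k : ℕ} (h : n + 1 ≠ 2 * (k + 1)) :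
    T (n + 1) (k + 1) (k + 1) = T n (k + 1) (k + 1) + T n k k :=
  T_succ_succ_succ_of_ne h k

lemma T_zero_of_two_mul_le : ∀ {n s : ℕ}, 2 * s ≤ n → T n s 0 = 1
  | n, 0, _ => T_zero_zero n
  | 0, _ + 1, h => by omega
  | n + 1, s + 1, h => by
    rcases h.lt_or_eq with hlt | heq
    · rw [T_succ_succ_zero_of_ne hlt.ne', T_zero_of_two_mul_le (by omega)]
    · rw [T_succ_succ_of_eq heq.symm, T_eq_zero_of_add_lt (by omega),
        T_zero_of_two_mul_le (by omega)]

lemma T_eq_T_diag : ∀ {n s i k : ℕ}, i ≤ s → s ≤ n → 2 * s ≤ n + i →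
    k = i - (2 * s - n) → T n s i = T n k k
  | n, s, 0, k, _, _, hsi, hk => by
    rw [hk, T_zero_of_two_mul_le (by omega), Nat.zero_sub, T_zero_zero]
  | 0, _ + 1, _, _, _, h, _, _ => by omega
  | n + 1, s + 1, j + 1, k, his, hsn, hsi, hk => by
    have ih (s i k : ℕ) (h : i ≤ s ∧ s ≤ n ∧ 2 * s ≤ n + i ∧ k = i - (2 * s - n)) :
        T n s i = T n k k :=
      T_eq_T_diag h.1 h.2.1 h.2.2.1 h.2.2.2
    rcases Nat.lt_trichotomy (2 * (s + 1)) (n + 1) with hlt | heq | hgt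
    · rw [show k = j + 1 by omega, T_succ_succ_succ_of_ne hlt.ne', T_diag_succ_succ (by omega),
        ih (s + 1) (j + 1) (j + 1) (by omega), ih s j j (by omega)]
    · rcases (Nat.lt_succ_iff.1 his).lt_or_eq with hjs | rfl
      · rw [show k = j + 1 by omega, T_succ_succ_of_eq heq.symm, T_diag_succ_succ (by omega),
          ih (s + 1) (j + 1) j (by omega), ih s (j + 1) (j + 1) (by omega), add_comm]
      · rw [show k = j + 1 by omega]
    · rw [T_succ_succ_succ_of_ne hgt.ne]
      rcases k with _ | m
      · rw [T_eq_zero_of_add_lt (by omega), zero_add, ih s j 0 (by omega), T_zero_zero,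
          T_zero_zero]
      · rw [T_diag_succ_succ (by omega), ih (s + 1) (j + 1) m (by omega),
          ih s j (m + 1) (by omega), add_comm]

lemma T_eq_T_diag_of_two_mul_le {n s i : ℕ} (h : 2 * s ≤ n) (hi : i ≤ s) :
    T n s i = T n i i :=
  T_eq_T_diag hi (by omega) (by omega) (by omega)

theorem stmt7 (n s i : ℕ) (hs : s < n / 2) :
    (i < s → T n s i = T n (s + 1) i) ∧ T n s s = T n (s + 1) s := by
  have key (j : ℕ) (hj : j ≤ s) : T n s j = T n (s + 1) j := by
    rw [T_eq_T_diag_of_two_mul_le (by omega) hj,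
      T_eq_T_diag_of_two_mul_le (s := s + 1) (by omega) (by omega)]
  exact ⟨fun h => key i h.le, key s le_rfl⟩
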